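/- Let L be a frame in which, for every x ∈ L, ∇(x) = ⋁ {Δ(y) : x ∨ y = 1} (join in the congruence frame). Then any two congruences on L with the same fitting are equal, where the fitting of C is ⋁{Δ(a) : Δ(a) ⊆ C}. -/
import Mathlib


variable {L : Type*} [Order.Frame L]

/-- The closed congruence `∇(a)`. -/
def nabla (a : L) : Set (L × L) := {p | p.1 ⊔ a = p.2 ⊔ a}

/-- The open congruence `Δ(a)`. -/
def delta (a : L) : Set (L × L) := {p | p.1 ⊓ a = p.2 ⊓ a}

/-- A frame congruence: an equivalence relation on `L` closed under binary meets
and arbitrary joins (a subframe of `L × L`). -/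
def IsFrameCong (C : Set (L × L)) : Prop :=
  (∀ x : L, (x, x) ∈ C) ∧
  (∀ x y : L, (x, y) ∈ C → (y, x) ∈ C) ∧
  (∀ x y z : L, (x, y) ∈ C → (y, z) ∈ C → (x, z) ∈ C) ∧
  (∀ x₁ y₁ x₂ y₂ : L, (x₁, y₁) ∈ C → (x₂, y₂) ∈ C → (x₁ ⊓ x₂, y₁ ⊓ y₂) ∈ C) ∧
  (∀ s : Set (L × L), s ⊆ C → (sSup (Prod.fst '' s), sSup (Prod.snd '' s)) ∈ C)

/-- The congruence generated by a relation: the intersection of all frame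
congruences containing it (the join in the assembly when applied to unions). -/
def congGen (R : Set (L × L)) : Set (L × L) :=
  ⋂₀ {C : Set (L × L) | IsFrameCong C ∧ R ⊆ C}

lemma join_pair {C : Set (L × L)} (hC : IsFrameCong C) {a b c d : L}
    (h1 : (a, b) ∈ C) (h2 : (c, d) ∈ C) : (a ⊔ c, b ⊔ d) ∈ C := by
  have := hC.2.2.2.2 {(a, b), (c, d)} (by
    intro p hp
    rcases hp with rfl | rfl <;> assumption)
  simpa [Set.image_pair] using this

/-- If `(x,y) ∈ C`, `u ⊓ x = v ⊓ x` and `u ⊔ y = v ⊔ y`, then `(u,v) ∈ C`. -/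
lemma mem_of_bounds {C : Set (L × L)} (hC : IsFrameCong C) {x y u v : L}
    (hxy : (x, y) ∈ C) (h1 : u ⊓ x = v ⊓ x) (h2 : u ⊔ y = v ⊔ y) : (u, v) ∈ C := by
  have h3 : (v ⊓ x, v ⊓ y) ∈ C := hC.2.2.2.1 v v x y (hC.1 v) hxy
  have h4 : (u, u ⊔ v ⊓ y) ∈ C := by
    have := join_pair hC (hC.1 u) h3
    rwa [← h1, sup_inf_self] at this
  have h3' : (u ⊓ x, u ⊓ y) ∈ C := hC.2.2.2.1 u u x y (hC.1 u) hxy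
  have h5 : (v, v ⊔ u ⊓ y) ∈ C := by
    have := join_pair hC (hC.1 v) h3'
    rwa [h1, sup_inf_self] at this
  have hm : u ⊔ v ⊓ y = v ⊔ u ⊓ y := by
    rw [sup_inf_left, sup_inf_left, h2, sup_comm u v, sup_comm v u]
  have h5' : (v, u ⊔ v ⊓ y) ∈ C := by rw [hm]; exact h5
  exact hC.2.2.1 _ _ _ h4 (hC.2.1 _ _ h5')

/-- Key step: if `(x,y) ∈ C` with `x ≤ y` and opens below `C` are below `D`,
then `(x,y) ∈ D`. -/
lemma step (h : ∀ x : L, nabla x = congGen (⋃ y ∈ {y : L | x ⊔ y = ⊤}, delta y))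
    {C D : Set (L × L)} (hC : IsFrameCong C) (hD : IsFrameCong D)
    (htr : ∀ a : L, delta a ⊆ C → delta a ⊆ D)
    {x y : L} (hxy : (x, y) ∈ C) (hle : x ≤ y) : (x, y) ∈ D := by
  set E : Set (L × L) := {p | (x ⊔ p.1 ⊓ y, x ⊔ p.2 ⊓ y) ∈ D} with hE
  have hEcong : IsFrameCong E := by
    refine ⟨?_, ?_, ?_, ?_, ?_⟩
    · intro u; exact hD.1 _
    · intro u v huv; exact hD.2.1 _ _ huv
    · intro u v w h1 h2; exact hD.2.2.1 _ _ _ h1 h2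
    · intro u₁ v₁ u₂ v₂ h1 h2
      have := hD.2.2.2.1 _ _ _ _ h1 h2
      have e : ∀ a b : L, (x ⊔ a ⊓ y) ⊓ (x ⊔ b ⊓ y) = x ⊔ (a ⊓ b) ⊓ y := by
        intro a b
        rw [← sup_inf_left]
        congr 1
        rw [inf_inf_inf_comm, inf_idem]
      simpa only [Set.mem_setOf_eq, hE, e] using this
    · intro s hs
      set s' : Set (L × L) := (fun p : L × L => (x ⊔ p.1 ⊓ y, x ⊔ p.2 ⊓ y)) '' s ∪ {(x, x)}
        with hs'
      have hsub : s' ⊆ D := by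
        rintro p (⟨q, hq, rfl⟩ | hp)
        · exact hs hq
        · simp only [Set.mem_singleton_iff] at hp
          subst hp; exact hD.1 x
      have key := hD.2.2.2.2 s' hsub
      have efst : ∀ (f : L × L → L), sSup ((fun p : L × L => x ⊔ f p ⊓ y) '' s ∪ {x})
          = x ⊔ sSup (f '' s) ⊓ y := by
        intro f
        apply le_antisymm
        · apply sSup_le
          rintro a (⟨q, hq, rfl⟩ | ha)
          · exact sup_le_sup_left (inf_le_inf_right _ (le_sSup (Set.mem_image_of_mem f hq))) _
          · simp only [Set.mem_singleton_iff] at ha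
            subst ha; exact le_sup_left
        · apply sup_le
          · exact le_sSup (Or.inr rfl)
          · rw [sSup_inf_eq]
            apply iSup₂_le
            rintro a ⟨q, hq, rfl⟩
            exact le_trans le_sup_right (le_sSup (Or.inl ⟨q, hq, rfl⟩))
      have ifst : Prod.fst '' s' = (fun p : L × L => x ⊔ p.1 ⊓ y) '' s ∪ {x} := by
        rw [hs', Set.image_union, Set.image_image, Set.image_singleton]
      have isnd : Prod.snd '' s' = (fun p : L × L => x ⊔ p.2 ⊓ y) '' s ∪ {x} := by
        rw [hs', Set.image_union, Set.image_image, Set.image_singleton]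
      rw [ifst, isnd] at key
      have e1 := efst Prod.fst
      have e2 := efst Prod.snd
      rw [e1, e2] at key
      exact key
  have hnab : nabla y ⊆ E := by
    rw [h y]
    intro p hp
    apply hp E
    constructor
    · exact hEcong
    · intro q hq
      simp only [Set.mem_iUnion, Set.mem_setOf_eq] at hq
      obtain ⟨z, hz, hqz⟩ := hq
      -- q.1 ⊓ z = q.2 ⊓ z, y ⊔ z = ⊤
      have hdsub : delta (x ⊔ z) ⊆ C := by
        intro r hr
        have hr' : r.1 ⊓ (x ⊔ z) = r.2 ⊓ (x ⊔ z) := hr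
        have ex : (x ⊔ z) ⊓ x = x := inf_eq_right.2 le_sup_left
        have ez : (x ⊔ z) ⊓ z = z := inf_eq_right.2 le_sup_right
        have hrx : r.1 ⊓ x = r.2 ⊓ x := by
          rw [← ex, ← inf_assoc, ← inf_assoc, hr']
        have hrz : r.1 ⊓ z = r.2 ⊓ z := by
          rw [← ez, ← inf_assoc, ← inf_assoc, hr']
        have hry : r.1 ⊔ y = r.2 ⊔ y := by
          have e : ∀ w : L, w ⊔ y = w ⊓ z ⊔ y := by
            intro w
            rw [sup_inf_right, sup_comm z y, hz, inf_top_eq]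
          rw [e r.1, e r.2, hrz]
        exact (mem_of_bounds hC hxy hrx hry : (r.1, r.2) ∈ C)
      have hdsubD := htr _ hdsub
      apply hdsubD
      show (x ⊔ q.1 ⊓ y) ⊓ (x ⊔ z) = (x ⊔ q.2 ⊓ y) ⊓ (x ⊔ z)
      have e : ∀ w : L, (x ⊔ w ⊓ y) ⊓ (x ⊔ z) = x ⊔ w ⊓ y ⊓ z := by
        intro w; rw [← sup_inf_left]
      have hqz' : q.1 ⊓ z = q.2 ⊓ z := hqz
      rw [e, e, inf_right_comm q.1 y z, inf_right_comm q.2 y z, hqz']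
  have hxyE : (x, y) ∈ E := hnab (by
    show x ⊔ y = y ⊔ y
    rw [sup_eq_right.2 hle, sup_idem])
  have : (x ⊔ x ⊓ y, x ⊔ y ⊓ y) ∈ D := hxyE
  rwa [inf_eq_left.2 hle, sup_idem, inf_idem, sup_eq_right.2 hle] at this

lemma subset_aux (h : ∀ x : L, nabla x = congGen (⋃ y ∈ {y : L | x ⊔ y = ⊤}, delta y))
    {C D : Set (L × L)} (hC : IsFrameCong C) (hD : IsFrameCong D)
    (htr : ∀ a : L, delta a ⊆ C → delta a ⊆ D) : C ⊆ D := by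
  intro p hp
  obtain ⟨x, y⟩ := p
  have h1 : (x, x ⊔ y) ∈ C := by
    have := join_pair hC (hC.1 x) hp
    simpa using this
  have h2 : (y, x ⊔ y) ∈ C := by
    have := join_pair hC (hC.1 y) hp
    exact hC.2.1 _ _ (by simpa [sup_comm] using this)
  have d1 : (x, x ⊔ y) ∈ D := step h hC hD htr h1 le_sup_left
  have d2 : (y, x ⊔ y) ∈ D := step h hC hD htr h2 le_sup_right
  exact hD.2.2.1 _ _ _ d1 (hD.2.1 _ _ d2)

theorem stmt_12
    (h : ∀ x : L, nabla x = congGen (⋃ y ∈ {y : L | x ⊔ y = ⊤}, delta y)) :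
    ∀ C D : Set (L × L), IsFrameCong C → IsFrameCong D →
      (∀ a : L, delta a ⊆ C ↔ delta a ⊆ D) → C = D := by
  intro C D hC hD hiff
  apply Set.Subset.antisymm
  · exact subset_aux h hC hD (fun a => (hiff a).1)
  · exact subset_aux h hD hC (fun a => (hiff a).2)
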